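/- arXiv:1608.00557 — 2 statements merged into one kernel-verified Lean document; each statement's English description precedes it below -/
import Mathlib

section
/- Given three sensors at (0,0), (x2, 0), (x3, y3) with x2 ≠ 0 and y3 ≠ 0, and a source on a line with parameters (x0, y0, θ, s), s ≠ 0, suppose the times of shortest approach satisfy t1 = -(sin θ/s)x0 - (cos θ/s)y0 + t0, t1 + t2 = (sin θ/s)x2, and t1 + t3 = (sin θ/s)x3 + (cos θ/s)y3. If additionally ((t1+t3)/(t1+t2))·x2 - x3 ≠ 0 and t1 + t2 ≠ 0, then tan θ = y3 / (((t1+t3)/(t1+t2))·x2 - x3). -/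
theorem stmt_1 (x0 y0 θ s t0 x2 x3 y3 t1 t2 t3 : ℝ)
    (hs : s ≠ 0) (hx2 : x2 ≠ 0) (hy3 : y3 ≠ 0)
    (h1 : t1 = -(Real.sin θ / s) * x0 - (Real.cos θ / s) * y0 + t0)
    (h2 : t1 + t2 = (Real.sin θ / s) * x2)
    (h3 : t1 + t3 = (Real.sin θ / s) * x3 + (Real.cos θ / s) * y3)
    (hden : ((t1 + t3) / (t1 + t2)) * x2 - x3 ≠ 0)
    (hsum : t1 + t2 ≠ 0) :
    Real.tan θ = y3 / (((t1 + t3) / (t1 + t2)) * x2 - x3) := by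
  have hsin : Real.sin θ ≠ 0 := by
    intro h; rw [h] at h2; simp at h2; exact hsum h2
  have key : ((t1 + t3) / (t1 + t2)) * x2 - x3 = Real.cos θ / Real.sin θ * y3 := by
    rw [h2, h3]
    field_simp
    ring
  rw [key] at hden ⊢
  have hcos : Real.cos θ ≠ 0 := by
    intro h; rw [h] at hden; simp at hden
  rw [Real.tan_eq_sin_div_cos]
  field_simp
end

section
/- For n sensors with independent observations T_j ~ Erlang(2λ_T, 2λ_T/μ_j(s,θ)), μ_j(s,θ) = (a_j sin θ + b_j cos θ)/s > 0 where a_j = x_j - x0, b_j = y_j - y0, the Fisher information cross term satisfies -E[∂² log L / ∂s ∂θ] = -(2λ_T/s) · Σ_j (a_j cos θ - b_j sin θ)/(a_j sin θ + b_j cos θ). -/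
/-!
Differentiating the log-likelihood in the angle gives, for each sensor, a function that is affine
in the scale `s` with slope `2λ_T T_j D_j' / D_j²`, where `D_j = a_j sin θ + b_j cos θ`; the mixed
derivative is this slope. Taking expectations with `E[T_j] = D_j / s` turns each slope into
`(2λ_T / s) · D_j' / D_j`.
-/

open MeasureTheory Filter Topology

theorem hasDerivAt_mul_sin_add_mul_cos (a b θ : ℝ) :
    HasDerivAt (fun w => a * Real.sin w + b * Real.cos w) (a * Real.cos θ - b * Real.sin θ) θ := by
  refine (((Real.hasDerivAt_sin θ).const_mul a).fun_add
    ((Real.hasDerivAt_cos θ).const_mul b)).congr_deriv ?_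
  ring

theorem hasDerivAt_erlangLogLik {D : ℝ → ℝ} {D' θ : ℝ} (c u t k m : ℝ)
    (hD : HasDerivAt D D' θ) (hD0 : D θ ≠ 0) (hcu : c * u ≠ 0) :
    HasDerivAt (fun w => c * Real.log (c * u / D w) + k - c * u * t / D w - m)
      (c * D' / D θ ^ 2 * t * u - c * D' / D θ) θ := by
  have hlog := ((hasDerivAt_const θ (c * u)).fun_div hD hD0).log (div_ne_zero hcu hD0)
  have hfrac := (hasDerivAt_const θ (c * u * t)).fun_div hD hD0
  refine ((((hlog.const_mul c).add_const k).fun_sub hfrac).sub_const m).congr_deriv ?_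
  obtain ⟨hc, hu⟩ := mul_ne_zero_iff.mp hcu
  field_simp
  ring

theorem deriv_deriv_eq_of_eventually_affine {F : ℝ → ℝ → ℝ} {θ s A B : ℝ}
    (h : ∀ᶠ u in 𝓝 s, deriv (F u) θ = A * u + B) :
    deriv (fun u => deriv (F u) θ) s = A := by
  rw [EventuallyEq.deriv_eq (f := fun u => A * u + B) h]
  simp

theorem stmt_13_general {Ω : Type*} [MeasurableSpace Ω] (P : Measure Ω) [IsProbabilityMeasure P]
    (n : ℕ) (θ s : ℝ) (hs : 0 < s)
    (lT : ℕ) (hlT : 1 ≤ lT)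
    (a b : Fin n → ℝ)
    (hdenpos : ∀ j, 0 < a j * Real.sin θ + b j * Real.cos θ)
    (T : Fin n → Ω → ℝ)
    (hmean : ∀ j, (∫ ω, T j ω ∂P) = (a j * Real.sin θ + b j * Real.cos θ) / s) :
    -(∫ ω, deriv (fun u : ℝ => deriv (fun w : ℝ => ∑ j,
        ((2 * lT : ℝ) * Real.log ((2 * lT : ℝ) * u / (a j * Real.sin w + b j * Real.cos w)) +
          ((2 * lT : ℝ) - 1) * Real.log (T j ω) -
          (2 * lT : ℝ) * u * T j ω / (a j * Real.sin w + b j * Real.cos w) -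
          Real.log (Nat.factorial (2 * lT - 1)))) θ) s ∂P) =
      -((2 * lT : ℝ) / s) * ∑ j,
        (a j * Real.cos θ - b j * Real.sin θ) / (a j * Real.sin θ + b j * Real.cos θ) := by
  set c : ℝ := 2 * lT
  have hc : 0 < c := by positivity
  have hint : ∀ j, Integrable (T j) P := fun j =>
    Integrable.of_integral_ne_zero (by rw [hmean j]; exact (div_pos (hdenpos j) hs).ne')
  have hmixed : ∀ ω, deriv (fun u : ℝ => deriv (fun w : ℝ => ∑ j,
      (c * Real.log (c * u / (a j * Real.sin w + b j * Real.cos w)) +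
        (c - 1) * Real.log (T j ω) - c * u * T j ω / (a j * Real.sin w + b j * Real.cos w) -
        Real.log (Nat.factorial (2 * lT - 1)))) θ) s =
      ∑ j, c * (a j * Real.cos θ - b j * Real.sin θ) / (a j * Real.sin θ + b j * Real.cos θ) ^ 2 *
        T j ω := by
    intro ω
    refine deriv_deriv_eq_of_eventually_affine
      (B := -∑ j, c * (a j * Real.cos θ - b j * Real.sin θ) / (a j * Real.sin θ + b j * Real.cos θ))
      ?_
    filter_upwards [Ioi_mem_nhds hs] with u hu
    rw [(HasDerivAt.fun_sum fun j _ => hasDerivAt_erlangLogLik c u (T j ω) _ _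
      (hasDerivAt_mul_sin_add_mul_cos (a j) (b j) θ) (hdenpos j).ne'
      (mul_pos hc hu).ne').deriv, Finset.sum_sub_distrib, Finset.sum_mul, sub_eq_add_neg]
  rw [integral_congr_ae (.of_forall hmixed),
    integral_finsetSum _ fun j _ => (hint j).const_mul _, Finset.mul_sum, ← Finset.sum_neg_distrib]
  refine Finset.sum_congr rfl fun j _ => ?_
  rw [integral_const_mul, hmean j]
  have hD := (hdenpos j).ne'
  field_simp

theorem stmt_13 {Ω : Type*} [MeasurableSpace Ω] (P : Measure Ω) [IsProbabilityMeasure P]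
    (n : ℕ) (x y : Fin n → ℝ) (x0 y0 θ s : ℝ) (hs : 0 < s)
    (lT : ℕ) (hlT : 1 ≤ lT)
    (a b : Fin n → ℝ) (ha : ∀ j, a j = x j - x0) (hb : ∀ j, b j = y j - y0)
    (hdenpos : ∀ j, 0 < a j * Real.sin θ + b j * Real.cos θ)
    (T : Fin n → Ω → ℝ) (hmeas : ∀ j, Measurable (T j)) (hTpos : ∀ j ω, 0 < T j ω)
    (hmean : ∀ j, (∫ ω, T j ω ∂P) = (a j * Real.sin θ + b j * Real.cos θ) / s) :
    -(∫ ω, deriv (fun u : ℝ => deriv (fun w : ℝ => ∑ j,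
        ((2 * lT : ℝ) * Real.log ((2 * lT : ℝ) * u / (a j * Real.sin w + b j * Real.cos w)) +
          ((2 * lT : ℝ) - 1) * Real.log (T j ω) -
          (2 * lT : ℝ) * u * T j ω / (a j * Real.sin w + b j * Real.cos w) -
          Real.log (Nat.factorial (2 * lT - 1)))) θ) s ∂P) =
      -((2 * lT : ℝ) / s) * ∑ j,
        (a j * Real.cos θ - b j * Real.sin θ) / (a j * Real.sin θ + b j * Real.cos θ) :=
  stmt_13_general P n θ s hs lT hlT a b hdenpos T hmean
end
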